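/- Let a, b > 0 with a − b > 1 and a + b < 2, let ε > 0 satisfy ε < min{1, (a−1−b)/(224b)} and ε < (2−a−b)/(224b), let φ(t) = 3π/2 for t ≤ 1 and φ(t) = 3π/2 + ε·ln(ln(e + (t−1)⁴)) for t > 1, and let g(t) = t^(a + b·sin(φ(t))) for t > 0, g(0) = 0. Then the function t ↦ g'(t)/t is strictly decreasing on (0,∞). -/

import Mathlib

/-!
For `t ≤ 1` we have `g t = t ^ (a - b)`, so `g' t / t = (a - b) t ^ (a - b - 2)`. For `t ≥ 1`,
`g t = t ^ p t` with `p = a - b cos (ε ψ)` and `ψ t = log (log (e + (t - 1) ^ 4))`, so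
`g' t / t = t ^ (p - 2) (p + X)`, whose derivative is `t ^ (p - 3)` times
`(p - 2 + X) (p + X) + 2 Y + X + Z`, where `X = t p' log t`, `Y = t p'`, `Z = t² p'' log t`.
Because `ψ` grows so slowly, `|X|, |Y| ≤ 8 b ε` and `|Z| ≤ 192 b ε` on `[1, ∞)`, which makes this
factor at most `a + b - 2 + 224 b ε < 0`. Both branches of `g` have derivative `a - b` at `t = 1`.
-/

open Real Filter Topology Set

lemma abs_mul_le_of_abs_le_one {s x C : ℝ} (hs : |s| ≤ 1) (hx : |x| ≤ C) : |s * x| ≤ C := by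
  rw [abs_mul]
  exact (mul_le_of_le_one_left (abs_nonneg x) hs).trans hx

lemma sin_three_pi_div_two_add (x : ℝ) : sin (3 * π / 2 + x) = -cos x := by
  rw [show 3 * π / 2 + x = x + π / 2 + π by ring, sin_add_pi, sin_add_pi_div_two]

noncomputable def quartic (t : ℝ) : ℝ := exp 1 + (t - 1) ^ 4

noncomputable def psi (t : ℝ) : ℝ := log (log (quartic t))

noncomputable def psiDeriv (t : ℝ) : ℝ := 4 * (t - 1) ^ 3 / (quartic t * log (quartic t))

noncomputable def psiDeriv2 (t : ℝ) : ℝ :=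
  12 * (t - 1) ^ 2 / (quartic t * log (quartic t)) - psiDeriv t ^ 2 * (log (quartic t) + 1)

lemma exp_one_le_quartic (t : ℝ) : exp 1 ≤ quartic t :=
  le_add_of_nonneg_right (by positivity)

lemma quartic_pos (t : ℝ) : 0 < quartic t := (exp_pos 1).trans_le (exp_one_le_quartic t)

lemma one_le_log_quartic (t : ℝ) : 1 ≤ log (quartic t) := by
  simpa using log_le_log (exp_pos 1) (exp_one_le_quartic t)

lemma log_quartic_pos (t : ℝ) : 0 < log (quartic t) := one_pos.trans_le (one_le_log_quartic t)

lemma log_le_log_quartic {t : ℝ} (ht : 0 < t) : log t ≤ log (quartic t) := by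
  refine log_le_log ht ?_
  unfold quartic
  nlinarith [exp_one_gt_d9, sq_nonneg ((t - 1) ^ 2 - 1), sq_nonneg (t - 1)]

lemma cube_mul_le_quartic (t : ℝ) : (t - 1) ^ 3 * t ≤ 2 * quartic t := by
  unfold quartic
  nlinarith [exp_one_gt_d9, sq_nonneg ((t - 1) ^ 2 - (t - 1)), sq_nonneg (t - 1),
    sq_nonneg ((t - 1) ^ 2 - 1)]

lemma sq_mul_sq_le_quartic (t : ℝ) : (t - 1) ^ 2 * t ^ 2 ≤ 10 * quartic t := by
  unfold quartic
  nlinarith [exp_one_gt_d9, sq_nonneg ((t - 1) ^ 2 - (t - 1)), sq_nonneg (t - 1),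
    sq_nonneg ((t - 1) ^ 2 - 1), sq_nonneg (2 * (t - 1) ^ 2 - (t - 1))]

lemma psi_one : psi 1 = 0 := by
  simp [psi, quartic]

lemma hasDerivAt_quartic (t : ℝ) : HasDerivAt quartic (4 * (t - 1) ^ 3) t :=
  ((((hasDerivAt_id t).sub_const 1).pow 4).const_add (exp 1)).congr_deriv (by simp)

lemma hasDerivAt_psi (t : ℝ) : HasDerivAt psi (psiDeriv t) t := by
  have h := ((hasDerivAt_quartic t).log (quartic_pos t).ne').log (log_quartic_pos t).ne'
  exact h.congr_deriv (by rw [psiDeriv, div_div])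

lemma hasDerivAt_psiDeriv (t : ℝ) : HasDerivAt psiDeriv (psiDeriv2 t) t := by
  have hv := (quartic_pos t).ne'
  have hL := (log_quartic_pos t).ne'
  have hN : HasDerivAt (fun s => 4 * (s - 1) ^ 3) (12 * (t - 1) ^ 2) t :=
    ((((hasDerivAt_id t).sub_const 1).pow 3).const_mul 4).congr_deriv (by simp; ring)
  have hD := (hasDerivAt_quartic t).mul ((hasDerivAt_quartic t).log hv)
  refine (hN.div hD (mul_ne_zero hv hL)).congr_deriv ?_
  rw [psiDeriv2, psiDeriv, Pi.mul_apply]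
  field_simp

lemma mul_psiDeriv_mul_log_quartic_le (t : ℝ) : t * psiDeriv t * log (quartic t) ≤ 8 := by
  have hv := quartic_pos t
  have hL := log_quartic_pos t
  have : t * psiDeriv t * log (quartic t) = 4 * ((t - 1) ^ 3 * t) / quartic t := by
    rw [psiDeriv]; field_simp
  rw [this, div_le_iff₀ hv]
  linarith [cube_mul_le_quartic t]

lemma psiDeriv_nonneg {t : ℝ} (ht : 1 ≤ t) : 0 ≤ psiDeriv t :=
  div_nonneg (mul_nonneg (by norm_num) (pow_nonneg (by linarith) 3))
    (mul_pos (quartic_pos t) (log_quartic_pos t)).le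

lemma mul_psiDeriv_le {t : ℝ} (ht : 1 ≤ t) : t * psiDeriv t ≤ 8 := by
  have := mul_nonneg (by linarith : (0:ℝ) ≤ t) (psiDeriv_nonneg ht)
  nlinarith [mul_psiDeriv_mul_log_quartic_le t, one_le_log_quartic t]

lemma mul_psiDeriv_mul_log_le {t : ℝ} (ht : 1 ≤ t) : t * psiDeriv t * log t ≤ 8 := by
  have := mul_nonneg (by linarith : (0:ℝ) ≤ t) (psiDeriv_nonneg ht)
  nlinarith [mul_psiDeriv_mul_log_quartic_le t, log_le_log_quartic (by linarith : (0:ℝ) < t)]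

lemma abs_sq_mul_psiDeriv2_mul_log_le {t : ℝ} (ht : 1 ≤ t) :
    |t ^ 2 * psiDeriv2 t * log t| ≤ 128 := by
  have hv := quartic_pos t
  have hL := one_le_log_quartic t
  have hlog := log_le_log_quartic (by linarith : (0:ℝ) < t)
  have hlog0 := log_nonneg ht
  have hsplit : t ^ 2 * psiDeriv2 t * log t =
      12 * ((t - 1) ^ 2 * t ^ 2) * log t / (quartic t * log (quartic t))
        - (t * psiDeriv t) ^ 2 * (log (quartic t) + 1) * log t := by
    rw [psiDeriv2]; ring
  rw [hsplit]
  apply abs_sub_le_of_nonneg_of_le (by positivity)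
  · rw [div_le_iff₀ (by positivity)]
    nlinarith [sq_mul_sq_le_quartic t, mul_le_mul_of_nonneg_left hlog (sq_nonneg ((t - 1) * t)),
      mul_nonneg (sq_nonneg ((t - 1) * t)) hlog0]
  · positivity
  · have hw : 0 ≤ t * psiDeriv t := mul_nonneg (by linarith) (psiDeriv_nonneg ht)
    calc (t * psiDeriv t) ^ 2 * (log (quartic t) + 1) * log t
        ≤ (t * psiDeriv t) ^ 2 * (2 * log (quartic t)) * log (quartic t) := by
          gcongr; linarith
      _ = 2 * (t * psiDeriv t * log (quartic t)) ^ 2 := by ring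
      _ ≤ 2 * 8 ^ 2 := by gcongr; exact mul_psiDeriv_mul_log_quartic_le t
      _ = 128 := by norm_num

noncomputable def exponent (a b ε t : ℝ) : ℝ := a - b * cos (ε * psi t)

noncomputable def exponentDeriv (b ε t : ℝ) : ℝ := b * ε * sin (ε * psi t) * psiDeriv t

noncomputable def exponentDeriv2 (b ε t : ℝ) : ℝ :=
  b * ε * (ε * cos (ε * psi t) * psiDeriv t ^ 2 + sin (ε * psi t) * psiDeriv2 t)

section
variable {a b ε t : ℝ}

lemma exponent_one : exponent a b ε 1 = a - b := by simp [exponent, psi_one]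

lemma hasDerivAt_exponent : HasDerivAt (exponent a b ε) (exponentDeriv b ε t) t :=
  ((((hasDerivAt_psi t).const_mul ε).cos.const_mul b).const_sub a).congr_deriv
    (by rw [exponentDeriv]; ring)

lemma hasDerivAt_exponentDeriv : HasDerivAt (exponentDeriv b ε) (exponentDeriv2 b ε t) t :=
  ((((hasDerivAt_psi t).const_mul ε).sin.const_mul (b * ε)).mul
    (hasDerivAt_psiDeriv t)).congr_deriv (by rw [exponentDeriv2]; ring)

lemma add_mul_sin_phase_eq_exponent_max :
    a + b * sin (if t ≤ 1 then 3 * π / 2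
      else 3 * π / 2 + ε * log (log (exp 1 + (t - 1) ^ 4))) = exponent a b ε (max t 1) := by
  split_ifs with ht
  · rw [max_eq_right ht, exponent_one, ← add_zero (3 * π / 2), sin_three_pi_div_two_add,
      cos_zero]
    ring
  · rw [max_eq_left (not_le.mp ht).le, exponent, sin_three_pi_div_two_add, psi, quartic]
    ring

lemma abs_exponent_sub_le (hb : 0 ≤ b) : |exponent a b ε t - a| ≤ b := by
  rw [exponent, sub_sub_cancel_left, abs_neg, abs_mul, abs_of_nonneg hb]
  exact mul_le_of_le_one_right hb (abs_cos_le_one _)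

lemma abs_mul_exponentDeriv_le (hb : 0 ≤ b) (hε : 0 ≤ ε) (ht : 1 ≤ t) :
    |t * exponentDeriv b ε t| ≤ 8 * (b * ε) := by
  have hw : 0 ≤ t * psiDeriv t := mul_nonneg (by linarith) (psiDeriv_nonneg ht)
  have : t * exponentDeriv b ε t = b * ε * (sin (ε * psi t) * (t * psiDeriv t)) := by
    rw [exponentDeriv]; ring
  rw [this, abs_mul, abs_of_nonneg (by positivity), mul_comm 8]
  gcongr
  exact abs_mul_le_of_abs_le_one (abs_sin_le_one _)
    (by rw [abs_of_nonneg hw]; exact mul_psiDeriv_le ht)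

lemma abs_mul_exponentDeriv_mul_log_le (hb : 0 ≤ b) (hε : 0 ≤ ε) (ht : 1 ≤ t) :
    |t * exponentDeriv b ε t * log t| ≤ 8 * (b * ε) := by
  have hw : 0 ≤ t * psiDeriv t * log t :=
    mul_nonneg (mul_nonneg (by linarith) (psiDeriv_nonneg ht)) (log_nonneg ht)
  have : t * exponentDeriv b ε t * log t =
      b * ε * (sin (ε * psi t) * (t * psiDeriv t * log t)) := by
    rw [exponentDeriv]; ring
  rw [this, abs_mul, abs_of_nonneg (by positivity), mul_comm 8]
  gcongr
  exact abs_mul_le_of_abs_le_one (abs_sin_le_one _)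
    (by rw [abs_of_nonneg hw]; exact mul_psiDeriv_mul_log_le ht)

lemma abs_sq_mul_exponentDeriv2_mul_log_le (hb : 0 ≤ b) (hε : 0 ≤ ε) (hε₁ : ε ≤ 1)
    (ht : 1 ≤ t) :
    |t ^ 2 * exponentDeriv2 b ε t * log t| ≤ 192 * (b * ε) := by
  have hw : 0 ≤ t * psiDeriv t := mul_nonneg (by linarith) (psiDeriv_nonneg ht)
  have hW : |(t * psiDeriv t) * (t * psiDeriv t * log t)| ≤ 64 := by
    rw [abs_of_nonneg (mul_nonneg hw (mul_nonneg hw (log_nonneg ht)))]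
    nlinarith [mul_psiDeriv_le ht, mul_psiDeriv_mul_log_le ht, mul_nonneg hw (log_nonneg ht)]
  have : t ^ 2 * exponentDeriv2 b ε t * log t = b * ε *
      (ε * (cos (ε * psi t) * ((t * psiDeriv t) * (t * psiDeriv t * log t)))
        + sin (ε * psi t) * (t ^ 2 * psiDeriv2 t * log t)) := by
    rw [exponentDeriv2]; ring
  rw [this, abs_mul, abs_of_nonneg (by positivity), mul_comm 192]
  gcongr
  calc _ ≤ _ := abs_add_le _ _
    _ ≤ 64 + 128 := add_le_add
        (abs_mul_le_of_abs_le_one (by rwa [abs_of_nonneg hε]) (abs_mul_le_of_abs_le_one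
          (abs_cos_le_one _) hW))
        (abs_mul_le_of_abs_le_one (abs_sin_le_one _) (abs_sq_mul_psiDeriv2_mul_log_le ht))
    _ = 192 := by norm_num

end

noncomputable def rpowDerivDiv (p p' : ℝ → ℝ) (t : ℝ) : ℝ :=
  t ^ (p t - 2) * (p t + t * p' t * log t)

section
variable {p p' : ℝ → ℝ} {t : ℝ}

lemma hasDerivAt_rpow_exponent {q : ℝ} (hp : HasDerivAt p q t) (ht : 0 < t) :
    HasDerivAt (fun s => s ^ p s) (t * rpowDerivDiv p (fun _ => q) t) t := by
  refine ((hasDerivAt_id t).rpow hp ht).congr_deriv ?_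
  have h1 : t ^ (p t - 1) = t ^ (p t - 2) * t := by
    rw [← rpow_add_one ht.ne']; ring_nf
  have h2 : t ^ p t = t ^ (p t - 2) * t ^ 2 := by
    rw [← rpow_natCast, ← rpow_add ht]; ring_nf
  simp only [id, rpowDerivDiv, h1, h2]
  ring

lemma hasDerivAt_rpowDerivDiv {p'' : ℝ} (hp : HasDerivAt p (p' t) t) (hp' : HasDerivAt p' p'' t)
    (ht : 0 < t) :
    HasDerivAt (rpowDerivDiv p p')
      (t ^ (p t - 2) / t * ((p t - 2 + t * p' t * log t) * (p t + t * p' t * log t)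
        + 2 * (t * p' t) + t * p' t * log t + t ^ 2 * p'' * log t)) t := by
  have h := ((hasDerivAt_id t).rpow (hp.sub_const 2) ht).mul
    (hp.add (((hasDerivAt_id t).mul hp').mul (hasDerivAt_log ht.ne')))
  refine h.congr_deriv ?_
  simp only [id, Pi.add_apply, Pi.mul_apply, rpow_sub_one ht.ne']
  field_simp
  ring

end

lemma strictAntiOn_rpowDerivDiv {p p' p'' : ℝ → ℝ} {a b c : ℝ}
    (hp : ∀ t ≥ 1, HasDerivAt p (p' t) t) (hp' : ∀ t ≥ 1, HasDerivAt p' (p'' t) t)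
    (hpa : ∀ t ≥ 1, |p t - a| ≤ b) (hY : ∀ t ≥ 1, |t * p' t| ≤ 8 * c)
    (hX : ∀ t ≥ 1, |t * p' t * log t| ≤ 8 * c)
    (hZ : ∀ t ≥ 1, |t ^ 2 * p'' t * log t| ≤ 192 * c)
    (h₁ : 224 * c < a - 1 - b) (h₂ : 224 * c < 2 - a - b) :
    StrictAntiOn (rpowDerivDiv p p') (Ici 1) := by
  have hderiv (t : ℝ) (ht : 1 ≤ t) := hasDerivAt_rpowDerivDiv (hp t ht) (hp' t ht) (by linarith)
  refine strictAntiOn_of_deriv_neg (convex_Ici 1)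
    (fun t ht => (hderiv t ht).continuousAt.continuousWithinAt) fun t ht => ?_
  rw [interior_Ici] at ht
  have ht : 1 ≤ t := le_of_lt ht
  rw [(hderiv t ht).deriv]
  refine mul_neg_of_pos_of_neg (div_pos (rpow_pos_of_pos (by linarith) _) (by linarith)) ?_
  obtain ⟨hP₁, hP₂⟩ := abs_le.mp (hpa t ht)
  obtain ⟨hY₁, hY₂⟩ := abs_le.mp (hY t ht)
  obtain ⟨hX₁, hX₂⟩ := abs_le.mp (hX t ht)
  have hZ₂ := (abs_le.mp (hZ t ht)).2
  -- `p + X ≥ 1` and `p - 2 + X < 0`, so `(p - 2 + X) (p + X) ≤ p - 2 + X`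
  nlinarith

section
variable {g p p' : ℝ → ℝ}

lemma hasDerivAt_one_of_eqOn_rpow {q : ℝ} (hp : HasDerivAt p q 1)
    (hleft : EqOn g (fun t => t ^ p 1) (Ioc 0 1)) (hright : EqOn g (fun t => t ^ p t) (Ici 1)) :
    HasDerivAt g (p 1) 1 := by
  have hl : HasDerivWithinAt g (p 1) (Iic 1) 1 := by
    refine ((hasDerivAt_rpow_const (p := p 1) (Or.inl one_ne_zero)).hasDerivWithinAt
      |>.congr_of_eventuallyEq ?_ (hleft ⟨one_pos, le_rfl⟩)).congr_deriv (by simp)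
    filter_upwards [Ioc_mem_nhdsLE (zero_lt_one' ℝ)] with t ht using hleft ht
  have hr : HasDerivWithinAt g (p 1) (Ici 1) 1 :=
    ((hasDerivAt_rpow_exponent hp one_pos).hasDerivWithinAt.congr_of_mem hright
      self_mem_Ici).congr_deriv (by simp [rpowDerivDiv])
  simpa [Iic_union_Ici] using hl.union hr

lemma deriv_div_self_eqOn_Ioc {q : ℝ} (hp : HasDerivAt p q 1)
    (hleft : EqOn g (fun t => t ^ p 1) (Ioc 0 1)) (hright : EqOn g (fun t => t ^ p t) (Ici 1)) :
    EqOn (fun t => deriv g t / t) (fun t => p 1 * t ^ (p 1 - 2)) (Ioc 0 1) := by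
  rintro t ⟨ht₀, ht₁⟩
  rcases ht₁.lt_or_eq with ht₁ | rfl
  · have hg : g =ᶠ[𝓝 t] fun s => s ^ p 1 :=
      eventually_of_mem (Ioo_mem_nhds ht₀ ht₁) fun s hs => hleft (Ioo_subset_Ioc_self hs)
    have h := (hasDerivAt_rpow_exponent (hasDerivAt_const t (p 1)) ht₀).congr_of_eventuallyEq hg
    simp only [h.deriv, rpowDerivDiv, mul_div_cancel_left₀ _ ht₀.ne']
    ring
  · simp [(hasDerivAt_one_of_eqOn_rpow hp hleft hright).deriv]

lemma deriv_div_self_eqOn_Ici (hp : ∀ t ≥ 1, HasDerivAt p (p' t) t)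
    (hleft : EqOn g (fun t => t ^ p 1) (Ioc 0 1)) (hright : EqOn g (fun t => t ^ p t) (Ici 1)) :
    EqOn (fun t => deriv g t / t) (rpowDerivDiv p p') (Ici 1) := by
  intro t ht
  rcases (mem_Ici.mp ht).lt_or_eq with ht₁ | rfl
  · have hg : g =ᶠ[𝓝 t] fun s => s ^ p s :=
      eventually_of_mem (Ioi_mem_nhds ht₁) fun s hs => hright (mem_Ici.mpr hs.le)
    have h := (hasDerivAt_rpow_exponent (hp t ht) (by linarith)).congr_of_eventuallyEq hg
    simp only [h.deriv, mul_div_cancel_left₀ _ (by linarith : t ≠ 0)]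
    rfl
  · simp [(hasDerivAt_one_of_eqOn_rpow (hp 1 le_rfl) hleft hright).deriv, rpowDerivDiv]

end

theorem g_deriv_over_t_decreasing_general (a b ε : ℝ) (hb : 0 < b)
    (hab : 1 < a - b) (hab2 : a + b < 2)
    (hε : 0 < ε) (hε' : ε < min 1 ((a - 1 - b) / (224 * b)))
    (hε'' : ε < (2 - a - b) / (224 * b))
    (φ : ℝ → ℝ)
    (hφ : ∀ t : ℝ, φ t = if t ≤ 1 then 3 * π / 2
      else 3 * π / 2 + ε * Real.log (Real.log (Real.exp 1 + (t - 1) ^ 4)))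
    (g : ℝ → ℝ)
    (hg : ∀ t : ℝ, 0 < t → g t = t ^ (a + b * Real.sin (φ t))) :
    StrictAntiOn (fun t => deriv g t / t) (Set.Ioi 0) := by
  have h₁ : 224 * (b * ε) < a - 1 - b := by
    have := (lt_div_iff₀ (by positivity)).mp (hε'.trans_le (min_le_right _ _)); linarith
  have h₂ : 224 * (b * ε) < 2 - a - b := by
    have := (lt_div_iff₀ (by positivity)).mp hε''; linarith
  have hexponent (t : ℝ) : a + b * sin (φ t) = exponent a b ε (max t 1) := by
    rw [hφ, add_mul_sin_phase_eq_exponent_max]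
  have hleft : EqOn g (fun t => t ^ exponent a b ε 1) (Ioc 0 1) := fun t ht => by
    rw [hg t ht.1, hexponent, max_eq_right ht.2]
  have hright : EqOn g (fun t => t ^ exponent a b ε t) (Ici 1) := fun t ht => by
    rw [hg t (zero_lt_one.trans_le ht), hexponent, max_eq_left ht]
  have hp : ∀ t ≥ 1, HasDerivAt (exponent a b ε) (exponentDeriv b ε t) t :=
    fun _ _ => hasDerivAt_exponent
  rw [← Ioc_union_Ici_eq_Ioi zero_lt_one]
  refine StrictAntiOn.union ?_ ?_ (isGreatest_Ioc zero_lt_one) isLeast_Ici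
  · refine StrictAntiOn.congr (fun x hx y _ hxy => ?_)
      (deriv_div_self_eqOn_Ioc (hp 1 le_rfl) hleft hright).symm
    rw [exponent_one]
    exact mul_lt_mul_of_pos_left (rpow_lt_rpow_of_neg hx.1 hxy (by linarith)) (by linarith)
  · refine StrictAntiOn.congr ?_ (deriv_div_self_eqOn_Ici hp hleft hright).symm
    exact strictAntiOn_rpowDerivDiv hp (fun t _ => hasDerivAt_exponentDeriv)
      (fun t _ => abs_exponent_sub_le hb.le)
      (fun t ht => abs_mul_exponentDeriv_le hb.le hε.le ht)
      (fun t ht => abs_mul_exponentDeriv_mul_log_le hb.le hε.le ht)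
      (fun t ht => abs_sq_mul_exponentDeriv2_mul_log_le hb.le hε.le
        ((hε'.trans_le (min_le_left _ _)).le) ht) h₁ h₂

theorem g_deriv_over_t_decreasing (a b ε : ℝ) (ha : 0 < a) (hb : 0 < b)
    (hab : 1 < a - b) (hab2 : a + b < 2)
    (hε : 0 < ε) (hε' : ε < min 1 ((a - 1 - b) / (224 * b)))
    (hε'' : ε < (2 - a - b) / (224 * b))
    (φ : ℝ → ℝ)
    (hφ : ∀ t : ℝ, φ t = if t ≤ 1 then 3 * π / 2
      else 3 * π / 2 + ε * Real.log (Real.log (Real.exp 1 + (t - 1) ^ 4)))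
    (g : ℝ → ℝ) (hg0 : g 0 = 0)
    (hg : ∀ t : ℝ, 0 < t → g t = t ^ (a + b * Real.sin (φ t))) :
    StrictAntiOn (fun t => deriv g t / t) (Set.Ioi 0) :=
  g_deriv_over_t_decreasing_general a b ε hb hab hab2 hε hε' hε'' φ hφ g hg
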